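/- arXiv:1601.01579 — 2 statements merged into one kernel-verified Lean document; each statement's English description precedes it below -/
import Mathlib

section
/- In the encoding of EBVASS runs as data trees used for the reduction to FO2, conditions (1)–(4) imply that counters never go negative: if in a binary data tree no two D_i-labeled nodes share a data value, no two I_i-labeled nodes share a data value, every D_i-labeled node has a proper descendant labeled I_i with the same data value, and every I_i-labeled node has a proper ancestor labeled D_i with the same data value, then for every node x, the number of I_i-labeled descendants of x (including x) is at least the number of D_i-labeled descendants of x (including x), for each i. -/
/-- Binary trees over an alphabet `E`. -/
inductive BTree (E : Type) : Type
  | leaf : E → BTree E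
  | node : E → BTree E → BTree E → BTree E

def BTree.label {E : Type} : BTree E → E
  | .leaf a => a
  | .node a _ _ => a

/-- The subtree at a position (`false` = left child, `true` = right child). -/
def BTree.get? {E : Type} : BTree E → List Bool → Option (BTree E)
  | t, [] => some t
  | .leaf _, _ :: _ => none
  | .node _ l r, b :: p => (if b then r else l).get? p

/-- The label at a position, if it exists. -/
def BTree.label? {E : Type} (t : BTree E) (p : List Bool) : Option E :=
  (t.get? p).map BTree.label

/-- The number of nodes of `t` whose label satisfies `g`. -/
def bcount {E : Type} (g : E → Bool) : BTree E → ℕ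
  | .leaf a => if g a then 1 else 0
  | .node a l r => (if g a then 1 else 0) + bcount g l + bcount g r

section

variable {L D : Type} (isD isI : L → Bool) (t : BTree (L × D))

/-- (1) No two `D_i`-labeled nodes share a data value. -/
def CondD_key : Prop :=
  ∀ (p q : List Bool) (l1 l2 : L) (d : D),
    t.label? p = some (l1, d) → t.label? q = some (l2, d) →
    isD l1 = true → isD l2 = true → p = q

/-- (2) No two `I_i`-labeled nodes share a data value. -/
def CondI_key : Prop :=
  ∀ (p q : List Bool) (l1 l2 : L) (d : D),
    t.label? p = some (l1, d) → t.label? q = some (l2, d) →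
    isI l1 = true → isI l2 = true → p = q

/-- (3) Every `D_i`-labeled node has a proper descendant labeled `I_i` with the
same data value. -/
def CondD_matched : Prop :=
  ∀ (p : List Bool) (l : L) (d : D),
    t.label? p = some (l, d) → isD l = true →
    ∃ (r : List Bool) (l' : L), r ≠ [] ∧
      t.label? (p ++ r) = some (l', d) ∧ isI l' = true

/-- (4) Every `I_i`-labeled node has a proper ancestor labeled `D_i` with the
same data value. -/
def CondI_matched : Prop :=
  ∀ (p : List Bool) (l : L) (d : D),
    t.label? p = some (l, d) → isI l = true →
    ∃ (q r : List Bool) (l' : L), p = q ++ r ∧ r ≠ [] ∧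
      t.label? q = some (l', d) ∧ isD l' = true

end

namespace BTree

variable {E : Type}

theorem get?_append (t : BTree E) (p q : List Bool) :
    t.get? (p ++ q) = (t.get? p).bind (·.get? q) := by
  induction p generalizing t with
  | nil => rfl
  | cons b p ih =>
    cases t with
    | leaf a => rfl
    | node a l r => exact ih _

theorem label?_append_of_get?_eq_some {t s : BTree E} {p : List Bool}
    (h : t.get? p = some s) (q : List Bool) : t.label? (p ++ q) = s.label? q := by
  simp only [label?, get?_append, h, Option.bind_some]

def nodesWith (g : E → Bool) : BTree E → Finset (List Bool)
  | .leaf a => if g a then {[]} else ∅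
  | .node a l r => (if g a then {[]} else ∅) ∪
      ((l.nodesWith g).map ⟨List.cons false, List.cons_injective⟩ ∪
        (r.nodesWith g).map ⟨List.cons true, List.cons_injective⟩)

theorem mem_nodesWith {g : E → Bool} {t : BTree E} {p : List Bool} :
    p ∈ t.nodesWith g ↔ ∃ a, t.label? p = some a ∧ g a = true := by
  induction t generalizing p with
  | leaf a => cases p <;> by_cases ha : g a <;> simp [nodesWith, label?, get?, label, ha]
  | node a l r ihl ihr =>
    cases p with
    | nil => by_cases ha : g a <;> simp [nodesWith, label?, get?, label, ha]
    | cons b p => cases b <;> by_cases ha : g a <;> simp [nodesWith, label?, get?, ha, ihl, ihr]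

theorem card_nodesWith (g : E → Bool) (t : BTree E) : (t.nodesWith g).card = bcount g t := by
  induction t with
  | leaf a => by_cases ha : g a <;> simp [nodesWith, bcount, ha]
  | node a l r ihl ihr =>
    have hroot : Disjoint (if g a then {[]} else ∅ : Finset (List Bool))
        ((l.nodesWith g).map ⟨List.cons false, List.cons_injective⟩ ∪
          (r.nodesWith g).map ⟨List.cons true, List.cons_injective⟩) := by
      split_ifs <;> simp
    have hchildren : Disjoint ((l.nodesWith g).map ⟨List.cons false, List.cons_injective⟩)
        ((r.nodesWith g).map ⟨List.cons true, List.cons_injective⟩) := by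
      simp [Finset.disjoint_left]
    rw [nodesWith, Finset.card_union_of_disjoint hroot, Finset.card_union_of_disjoint hchildren,
      Finset.card_map, Finset.card_map, ihl, ihr, bcount, add_assoc]
    split_ifs <;> simp

end BTree

section

variable {L D : Type} {isD isI : L → Bool} {t s : BTree (L × D)} {p : List Bool}

theorem CondD_key.of_get?_eq_some (h : CondD_key isD t) (hs : t.get? p = some s) :
    CondD_key isD s := by
  intro q q' l l' d hq hq' hl hl'
  simp only [← BTree.label?_append_of_get?_eq_some hs] at hq hq'
  exact List.append_cancel_left (h _ _ l l' d hq hq' hl hl')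

theorem CondD_matched.of_get?_eq_some (h : CondD_matched isD isI t)
    (hs : t.get? p = some s) : CondD_matched isD isI s := by
  intro q l d hq hl
  rw [← BTree.label?_append_of_get?_eq_some hs] at hq
  obtain ⟨r, l', hr, hlab, hl'⟩ := h _ l d hq hl
  rw [List.append_assoc, BTree.label?_append_of_get?_eq_some hs] at hlab
  exact ⟨r, l', hr, hlab, hl'⟩

/-- Matching each `D`-node with an `I`-node of the same data value is injective, since data
values of `D`-nodes are distinct. -/
theorem bcount_le_bcount_of_condD (hkey : CondD_key isD t) (hmatch : CondD_matched isD isI t) :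
    bcount (fun x => isD x.1) t ≤ bcount (fun x => isI x.1) t := by
  classical
  rw [← BTree.card_nodesWith, ← BTree.card_nodesWith]
  have hpartner : ∀ q ∈ t.nodesWith (fun x => isD x.1), ∃ q' ∈ t.nodesWith (fun x => isI x.1),
      (t.label? q').map Prod.snd = (t.label? q).map Prod.snd := by
    intro q hq
    obtain ⟨⟨l, d⟩, hlab, hl⟩ := BTree.mem_nodesWith.mp hq
    obtain ⟨r, l', -, hlab', hl'⟩ := hmatch q l d hlab hl
    exact ⟨q ++ r, BTree.mem_nodesWith.mpr ⟨_, hlab', hl'⟩, by rw [hlab, hlab']; rfl⟩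
  choose! f hfI hfdata using hpartner
  refine Finset.card_le_card_of_injOn f hfI fun q hq q' hq' hff => ?_
  obtain ⟨⟨l, d⟩, hlab, hl⟩ := BTree.mem_nodesWith.mp hq
  obtain ⟨⟨l', d'⟩, hlab', hl'⟩ := BTree.mem_nodesWith.mp hq'
  have hdata := (hfdata q hq).symm.trans (hff ▸ hfdata q' hq')
  rw [hlab, hlab'] at hdata
  cases hdata
  exact hkey q q' l l' d hlab hlab' hl hl'

end

theorem encoding_counters_nonneg_general {L D : Type} (isD isI : L → Bool)
    (t : BTree (L × D))
    (h1 : CondD_key isD t)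
    (h3 : CondD_matched isD isI t) :
    ∀ (p : List Bool) (t' : BTree (L × D)), t.get? p = some t' →
      bcount (fun x => isD x.1) t' ≤ bcount (fun x => isI x.1) t' :=
  fun _ _ hget => bcount_le_bcount_of_condD (h1.of_get?_eq_some hget) (h3.of_get?_eq_some hget)

/-- Under conditions (1)–(4) of the EBVASS-to-FO2 encoding, counters never go
negative: in every subtree, the number of `I_i`-labeled nodes is at least the
number of `D_i`-labeled nodes. -/
theorem encoding_counters_nonneg {L D : Type} (isD isI : L → Bool)
    (t : BTree (L × D))
    (h1 : CondD_key isD t) (h2 : CondI_key isI t)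
    (h3 : CondD_matched isD isI t) (h4 : CondI_matched isD isI t) :
    ∀ (p : List Bool) (t' : BTree (L × D)), t.get? p = some t' →
      bcount (fun x => isD x.1) t' ≤ bcount (fun x => isI x.1) t' :=
  encoding_counters_nonneg_general isD isI t h1 h3
end

section
/- Under conditions (1)–(4) of the EBVASS-to-FO2 encoding, at the root of the tree the number of I_i-labeled nodes equals the number of D_i-labeled nodes, for each i. -/
/-! Both counts equal the number of data values carried by the nodes of the respective kind:
by (1) and (2) the data value is injective on `D_i`-nodes and on `I_i`-nodes, and by (3) and (4)
the two kinds of nodes carry the same data values. -/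

namespace BTree

variable {E : Type}

def positionsWith (g : E → Bool) : BTree E → Finset (List Bool)
  | .leaf a => if g a then {[]} else ∅
  | .node a l r =>
      (if g a then {[]} else ∅) ∪
        ((l.positionsWith g).map ⟨List.cons false, List.cons_injective⟩ ∪
          (r.positionsWith g).map ⟨List.cons true, List.cons_injective⟩)

theorem mem_positionsWith (g : E → Bool) (t : BTree E) (p : List Bool) :
    p ∈ t.positionsWith g ↔ ∃ a, t.label? p = some a ∧ g a = true := by
  induction t generalizing p with
  | leaf a => cases p <;> by_cases h : g a <;> simp [positionsWith, label?, get?, label, h]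
  | node a l r ihl ihr =>
    cases p with
    | nil => by_cases h : g a <;> simp [positionsWith, label?, get?, label, h]
    | cons b q =>
      have hroot : b :: q ∉ (if g a then {[]} else ∅ : Finset (List Bool)) := by
        split_ifs <;> simp
      cases b
      · simpa [positionsWith, hroot, label?, get?] using ihl q
      · simpa [positionsWith, hroot, label?, get?] using ihr q

theorem bcount_eq_card_positionsWith (g : E → Bool) (t : BTree E) :
    bcount g t = (t.positionsWith g).card := by
  induction t with
  | leaf a => by_cases h : g a <;> simp [bcount, positionsWith, h]
  | node a l r ihl ihr =>
    have hchildren : Disjoint ((l.positionsWith g).map ⟨List.cons false, List.cons_injective⟩)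
        ((r.positionsWith g).map ⟨List.cons true, List.cons_injective⟩) := by
      simp [Finset.disjoint_left]
    have hroot : Disjoint (if g a then {[]} else ∅)
        ((l.positionsWith g).map ⟨List.cons false, List.cons_injective⟩ ∪
          (r.positionsWith g).map ⟨List.cons true, List.cons_injective⟩) := by
      split_ifs <;> simp
    rw [positionsWith, Finset.card_union_of_disjoint hroot,
      Finset.card_union_of_disjoint hchildren, Finset.card_map, Finset.card_map, bcount, ihl, ihr]
    split_ifs <;> simp [add_assoc]

section

variable {L D : Type} (t : BTree (L × D))

def dataAt (p : List Bool) : Option D := (t.label? p).map Prod.snd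

variable {t}

theorem injOn_dataAt_of_key {k : L → Bool} (h : CondD_key k t) :
    Set.InjOn t.dataAt (t.positionsWith fun x => k x.1) := by
  intro p hp q hq hpq
  obtain ⟨⟨l₁, d₁⟩, hp, hl₁⟩ := (mem_positionsWith _ _ _).1 hp
  obtain ⟨⟨l₂, d₂⟩, hq, hl₂⟩ := (mem_positionsWith _ _ _).1 hq
  simp only [dataAt, hp, hq, Option.map_some, Option.some.injEq] at hpq
  subst hpq
  exact h p q l₁ l₂ d₁ hp hq hl₁ hl₂

theorem image_dataAt_subset [DecidableEq D] {k₁ k₂ : L → Bool}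
    (h : ∀ p l d, t.label? p = some (l, d) → k₁ l = true →
      ∃ q l', t.label? q = some (l', d) ∧ k₂ l' = true) :
    (t.positionsWith fun x => k₁ x.1).image t.dataAt ⊆
      (t.positionsWith fun x => k₂ x.1).image t.dataAt := by
  intro d hd
  obtain ⟨p, hp, rfl⟩ := Finset.mem_image.1 hd
  obtain ⟨⟨l, d⟩, hp, hl⟩ := (mem_positionsWith _ _ _).1 hp
  obtain ⟨q, l', hq, hl'⟩ := h p l d hp hl
  refine Finset.mem_image.2 ⟨q, (mem_positionsWith _ _ _).2 ⟨_, hq, hl'⟩, ?_⟩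
  simp [dataAt, hp, hq]

end

end BTree

/-- Under conditions (1)–(4) of the EBVASS-to-FO2 encoding, at the root of the
tree the number of `I_i`-labeled nodes equals the number of `D_i`-labeled
nodes. -/
theorem encoding_counters_zero_at_root {L D : Type} (isD isI : L → Bool)
    (t : BTree (L × D))
    (h1 : CondD_key isD t) (h2 : CondI_key isI t)
    (h3 : CondD_matched isD isI t) (h4 : CondI_matched isD isI t) :
    bcount (fun x => isI x.1) t = bcount (fun x => isD x.1) t := by
  classical
  have hDI := BTree.image_dataAt_subset (k₁ := isD) (k₂ := isI) fun p l d hp hl =>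
    let ⟨r, l', _, hr, hl'⟩ := h3 p l d hp hl
    ⟨p ++ r, l', hr, hl'⟩
  have hID := BTree.image_dataAt_subset (k₁ := isI) (k₂ := isD) fun p l d hp hl =>
    let ⟨q, _, l', _, _, hq, hl'⟩ := h4 p l d hp hl
    ⟨q, l', hq, hl'⟩
  -- `CondI_key isI t` unfolds to `CondD_key isI t`.
  rw [BTree.bcount_eq_card_positionsWith, BTree.bcount_eq_card_positionsWith,
    ← Finset.card_image_of_injOn (BTree.injOn_dataAt_of_key h2),
    ← Finset.card_image_of_injOn (BTree.injOn_dataAt_of_key h1), hID.antisymm hDI]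
end
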